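/- Let Γ be an ILX-MCS with ¬(B ▷ C) ∈ Γ. Then there is an ILX-MCS Δ such that Γ ≺_{{¬C}} Δ and B, □¬B ∈ Δ. -/

import Mathlib

inductive ILForm : Type
  | bot : ILForm
  | var : ℕ → ILForm
  | imp : ILForm → ILForm → ILForm
  | box : ILForm → ILForm
  | rhd : ILForm → ILForm → ILForm
  deriving DecidableEq

namespace ILForm

def neg (A : ILForm) : ILForm := A.imp ILForm.bot
def or (A B : ILForm) : ILForm := A.neg.imp B
def and (A B : ILForm) : ILForm := (A.imp B.neg).neg
def dia (A : ILForm) : ILForm := A.neg.box.neg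

end ILForm

/-- A Boolean valuation: respects `⊥` and `→`, arbitrary on variables, boxes and `▷`. -/
def IsBoolVal (v : ILForm → Bool) : Prop :=
  v ILForm.bot = false ∧ ∀ A B : ILForm, v (A.imp B) = (!(v A) || v B)

/-- Classical tautologies in the modal language. -/
def ILTaut (A : ILForm) : Prop := ∀ v, IsBoolVal v → v A = true

/-- Provability in the interpretability logic IL. -/
inductive ILProv : ILForm → Prop
  | taut {A : ILForm} : ILTaut A → ILProv A
  | K {A B : ILForm} : ILProv (((A.imp B).box).imp ((A.box).imp (B.box)))
  | L {A : ILForm} : ILProv ((((A.box).imp A).box).imp (A.box))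
  | J1 {A B : ILForm} : ILProv (((A.imp B).box).imp (A.rhd B))
  | J2 {A B C : ILForm} : ILProv (((A.rhd B).and (B.rhd C)).imp (A.rhd C))
  | J3 {A B C : ILForm} : ILProv (((A.rhd C).and (B.rhd C)).imp ((A.or B).rhd C))
  | J4 {A B : ILForm} : ILProv ((A.rhd B).imp ((A.dia).imp (B.dia)))
  | J5 {A : ILForm} : ILProv ((A.dia).rhd A)
  | mp {A B : ILForm} : ILProv (A.imp B) → ILProv A → ILProv B
  | nec {A : ILForm} : ILProv A → ILProv (A.box)

/-- An extension of IL: contains all IL theorems, closed under modus ponens and necessitation. -/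
structure ILExtension (P : ILForm → Prop) : Prop where
  il : ∀ {A}, ILProv A → P A
  mp : ∀ {A B}, P (A.imp B) → P A → P B
  nec : ∀ {A}, P A → P (A.box)

/-- Derivability from a set of assumptions in the logic `P`. -/
inductive Deriv (P : ILForm → Prop) (S : Set ILForm) : ILForm → Prop
  | thm {A : ILForm} : P A → Deriv P S A
  | mem {A : ILForm} : A ∈ S → Deriv P S A
  | mp {A B : ILForm} : Deriv P S (A.imp B) → Deriv P S A → Deriv P S B

def ILConsistent (P : ILForm → Prop) (S : Set ILForm) : Prop := ¬ Deriv P S ILForm.bot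

/-- Maximal consistent set w.r.t. the logic `P`. -/
def ILMCS (P : ILForm → Prop) (S : Set ILForm) : Prop :=
  ILConsistent P S ∧ ∀ T : Set ILForm, S ⊂ T → ¬ ILConsistent P T

/-- Finite disjunction; the empty disjunction is `⊥`. -/
def bigOr : List ILForm → ILForm
  | [] => ILForm.bot
  | A :: l => A.or (bigOr l)

/-- `Assuring Γ Δ S` ("Γ ≺_S Δ"): Δ is an S-assuring successor of Γ. -/
def Assuring (Γ Δ : Set ILForm) (S : Set ILForm) : Prop :=
  ∀ (A : ILForm) (L : List ILForm), (∀ B ∈ L, B ∈ S) →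
    (A.neg.rhd (bigOr (L.map ILForm.neg))) ∈ Γ → A ∈ Δ ∧ A.box ∈ Δ

/-- `Succ Γ Δ` ("Γ ≺ Δ"): whenever □A ∈ Γ, both A and □A are in Δ. -/
def Succ (Γ Δ : Set ILForm) : Prop :=
  ∀ A : ILForm, A.box ∈ Γ → A ∈ Δ ∧ A.box ∈ Δ

/-! Let `X` be the set of formulas `A` with `¬A ▷ C ∈ Γ`. The candidate successor
`{B, □¬B} ∪ X ∪ □X` is consistent: `X` is closed under conjunction (by J3), so an inconsistency
reduces to `⊢ □¬B → B → □A → ¬A` for a single `A ∈ X`. By Löb's axiom `B ▷ B ∧ □¬B`, and by J5 this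
inconsistency yields `B ∧ □¬B ▷ ¬A`, hence `B ▷ ¬A ▷ C`, contradicting `¬(B ▷ C) ∈ Γ`. A Lindenbaum
extension of the candidate is the required `Δ`. -/

open ILForm

local prefix:max "□" => ILForm.box
local prefix:max "◇" => ILForm.dia
local prefix:max "∼" => ILForm.neg
local infixr:65 " ⋏ " => ILForm.and
local infixr:60 " ⋎ " => ILForm.or
local infix:55 " ▷ " => ILForm.rhd
local infixr:52 " ➝ " => ILForm.imp

variable {P : ILForm → Prop}

namespace IsBoolVal

variable {v : ILForm → Bool}

@[simp] theorem imp_eq_true (hv : IsBoolVal v) (A B : ILForm) :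
    v (A ➝ B) = true ↔ (v A = true → v B = true) := by
  rw [hv.2]
  cases v A <;> simp

@[simp] theorem neg_eq_true (hv : IsBoolVal v) (A : ILForm) : v ∼A = true ↔ ¬v A = true := by
  simp [ILForm.neg, hv, hv.1]

@[simp] theorem and_eq_true (hv : IsBoolVal v) (A B : ILForm) :
    v (A ⋏ B) = true ↔ v A = true ∧ v B = true := by
  simp [ILForm.and, hv]

@[simp] theorem or_eq_true (hv : IsBoolVal v) (A B : ILForm) :
    v (A ⋎ B) = true ↔ v A = true ∨ v B = true := by
  simp [ILForm.or, hv]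
  grind

@[simp] theorem dia_eq_true (hv : IsBoolVal v) (A : ILForm) : v ◇A = true ↔ ¬v (□∼A) = true := by
  simp [ILForm.dia, hv]

theorem bigOr_eq_true (hv : IsBoolVal v) :
    ∀ L : List ILForm, v (bigOr L) = true ↔ ∃ D ∈ L, v D = true
  | [] => by simp [bigOr, hv.1]
  | A :: L => by simp [bigOr, hv, hv.bigOr_eq_true L]

end IsBoolVal

theorem ILTaut.bigOr_imp {L : List ILForm} {C : ILForm} (h : ∀ D ∈ L, ILTaut (D ➝ C)) :
    ILTaut (bigOr L ➝ C) := fun v hv => by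
  rw [hv.imp_eq_true, hv.bigOr_eq_true]
  rintro ⟨D, hD, hvD⟩
  exact (hv.imp_eq_true D C).1 (h D hD v hv) hvD

namespace ILExtension

theorem taut (hP : ILExtension P) {A : ILForm} (h : ILTaut A) : P A := hP.il (.taut h)

theorem mp₂ (hP : ILExtension P) {A B C : ILForm} (h : P (A ➝ B ➝ C)) (hA : P A) (hB : P B) :
    P C :=
  hP.mp (hP.mp h hA) hB

theorem imp_imp_of_and_imp (hP : ILExtension P) {A B C : ILForm} (h : P (A ⋏ B ➝ C)) :
    P (A ➝ B ➝ C) :=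
  hP.mp (hP.taut fun v hv => by simp [hv]) h

theorem imp_trans (hP : ILExtension P) {A B C : ILForm} (h₁ : P (A ➝ B)) (h₂ : P (B ➝ C)) :
    P (A ➝ C) :=
  hP.mp₂ (hP.taut fun v hv => by simp [hv]; grind) h₁ h₂

theorem box_imp_box (hP : ILExtension P) {A B : ILForm} (h : P (A ➝ B)) : P (□A ➝ □B) :=
  hP.mp (hP.il .K) (hP.nec h)

theorem rhd_of_imp (hP : ILExtension P) {A B : ILForm} (h : P (A ➝ B)) : P (A ▷ B) :=
  hP.mp (hP.il .J1) (hP.nec h)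

theorem rhd_trans (hP : ILExtension P) {A B C : ILForm} (h₁ : P (A ▷ B)) (h₂ : P (B ▷ C)) :
    P (A ▷ C) :=
  hP.mp₂ (hP.imp_imp_of_and_imp (hP.il .J2)) h₁ h₂

theorem or_rhd (hP : ILExtension P) {A B C : ILForm} (h₁ : P (A ▷ C)) (h₂ : P (B ▷ C)) :
    P (A ⋎ B ▷ C) :=
  hP.mp₂ (hP.imp_imp_of_and_imp (hP.il .J3)) h₁ h₂

theorem rhd_of_imp_or_dia (hP : ILExtension P) {A B : ILForm} (h : P (A ➝ B ⋎ ◇B)) :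
    P (A ▷ B) :=
  hP.rhd_trans (hP.rhd_of_imp h)
    (hP.or_rhd (hP.rhd_of_imp (hP.taut fun v hv => by simp [hv])) (hP.il .J5))

theorem rhd_and_box_neg (hP : ILExtension P) (A : ILForm) : P (A ▷ A ⋏ □∼A) := by
  set D := A ⋏ □∼A
  have hD : P (∼D ➝ □∼A ➝ ∼A) := hP.taut fun v hv => by simp [D, hv]; grind
  have hboxD : P (□∼D ➝ □∼A) := hP.imp_trans (hP.box_imp_box hD) (hP.il .L)
  -- `A ∧ ¬D` forces `¬□¬A`, hence `¬□¬D`, that is `◇D`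
  refine hP.rhd_of_imp_or_dia (hP.mp (hP.taut fun v hv => ?_) hboxD)
  simp [D, hv]
  grind

theorem rhd_neg_of_imp (hP : ILExtension P) {A B : ILForm} (h : P (□∼B ➝ B ➝ □A ➝ ∼A)) :
    P (B ▷ ∼A) := by
  have hbox : P (□∼∼A ➝ □A) := hP.box_imp_box (hP.taut fun v hv => by simp [hv])
  have hdia : P (B ⋏ □∼B ➝ ∼A ⋎ ◇∼A) := hP.mp₂ (hP.taut fun v hv => by simp [hv]; grind) h hbox
  exact hP.rhd_trans (hP.rhd_and_box_neg B) (hP.rhd_of_imp_or_dia hdia)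

end ILExtension

namespace Deriv

theorem mono {S T : Set ILForm} (hST : S ⊆ T) {F : ILForm} (h : Deriv P S F) : Deriv P T F := by
  induction h with
  | thm h => exact .thm h
  | mem h => exact .mem (hST h)
  | mp _ _ ih₁ ih₂ => exact .mp ih₁ ih₂

theorem trans {S T : Set ILForm} {F : ILForm} (h : Deriv P T F) (hT : ∀ G ∈ T, Deriv P S G) :
    Deriv P S F := by
  induction h with
  | thm h => exact .thm h
  | mem h => exact hT _ h
  | mp _ _ ih₁ ih₂ => exact .mp ih₁ ih₂

theorem imp_of_insert (hP : ILExtension P) {S : Set ILForm} {A F : ILForm}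
    (h : Deriv P (insert A S) F) : Deriv P S (A ➝ F) := by
  have hK : ∀ G, Deriv P S G → Deriv P S (A ➝ G) := fun G hG =>
    .mp (.thm (hP.taut fun v hv => by simp [hv]; grind)) hG
  induction h with
  | thm h => exact hK _ (.thm h)
  | mem h =>
    rcases h with rfl | h
    · exact .thm (hP.taut fun v hv => by simp [hv])
    · exact hK _ (.mem h)
  | mp _ _ ih₁ ih₂ => exact .mp (.mp (.thm (hP.taut fun v hv => by simp [hv]; grind)) ih₁) ih₂

theorem prov_of_empty (hP : ILExtension P) {F : ILForm} (h : Deriv P ∅ F) : P F := by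
  induction h with
  | thm h => exact h
  | mem h => exact absurd h (Set.notMem_empty _)
  | mp _ _ ih₁ ih₂ => exact hP.mp ih₁ ih₂

theorem prov_imp_of_singleton (hP : ILExtension P) {A F : ILForm} (h : Deriv P {A} F) :
    P (A ➝ F) :=
  prov_of_empty hP (imp_of_insert hP (by rwa [LawfulSingleton.insert_empty_eq]))

theorem insert_box_of_imp (hP : ILExtension P) {S : Set ILForm} {A A' F : ILForm}
    (hA : P (A' ➝ A)) (h : Deriv P (insert A (insert (□A) S)) F) :
    Deriv P (insert A' (insert (□A') S)) F := by
  refine h.trans fun G hG => ?_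
  rcases hG with rfl | rfl | hG
  · exact .mp (.thm hA) (.mem (by simp))
  · exact .mp (.thm (hP.box_imp_box hA)) (.mem (by simp))
  · exact .mem (by simp [hG])

theorem exists_insert_of_union_image_box (hP : ILExtension P) {S X : Set ILForm}
    (hne : X.Nonempty) (hX : ∀ A ∈ X, ∀ A' ∈ X, A ⋏ A' ∈ X) {F : ILForm}
    (h : Deriv P (S ∪ (X ∪ ILForm.box '' X)) F) :
    ∃ A ∈ X, Deriv P (insert A (insert (□A) S)) F := by
  obtain ⟨A₀, hA₀⟩ := hne
  have hand (A A' : ILForm) : P (A ⋏ A' ➝ A) ∧ P (A ⋏ A' ➝ A') :=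
    ⟨hP.taut fun v hv => by simp [hv]; grind,
      hP.taut fun v hv => by simp [hv]⟩
  induction h with
  | thm h => exact ⟨A₀, hA₀, .thm h⟩
  | mem h =>
    rcases h with h | h | ⟨A, hA, rfl⟩
    · exact ⟨A₀, hA₀, .mem (by simp [h])⟩
    · exact ⟨_, h, .mem (by simp)⟩
    · exact ⟨A, hA, .mem (by simp)⟩
  | mp _ _ ih₁ ih₂ =>
    obtain ⟨A, hA, h₁⟩ := ih₁
    obtain ⟨A', hA', h₂⟩ := ih₂
    exact ⟨A ⋏ A', hX A hA A' hA',
      .mp (insert_box_of_imp hP (hand A A').1 h₁) (insert_box_of_imp hP (hand A A').2 h₂)⟩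

theorem exists_mem_of_sUnion {c : Set (Set ILForm)} (hc : IsChain (· ⊆ ·) c) (hne : c.Nonempty)
    {F : ILForm} (h : Deriv P (⋃₀ c) F) : ∃ S ∈ c, Deriv P S F := by
  induction h with
  | thm h => obtain ⟨S, hS⟩ := hne; exact ⟨S, hS, .thm h⟩
  | mem h => obtain ⟨S, hS, hF⟩ := h; exact ⟨S, hS, .mem hF⟩
  | mp _ _ ih₁ ih₂ =>
    obtain ⟨S₁, hS₁, h₁⟩ := ih₁
    obtain ⟨S₂, hS₂, h₂⟩ := ih₂
    rcases hc.total hS₁ hS₂ with h₁₂ | h₂₁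
    · exact ⟨S₂, hS₂, .mp (h₁.mono h₁₂) h₂⟩
    · exact ⟨S₁, hS₁, .mp h₁ (h₂.mono h₂₁)⟩

end Deriv

theorem exists_ILMCS_superset {S : Set ILForm} (h : ILConsistent P S) :
    ∃ Δ, S ⊆ Δ ∧ ILMCS P Δ := by
  obtain ⟨Δ, hSΔ, hmax⟩ := zorn_subset_nonempty {T | S ⊆ T ∧ ILConsistent P T}
    (fun c hc hchain hne => ⟨⋃₀ c,
      ⟨(hc hne.some_mem).1.trans (Set.subset_sUnion_of_mem hne.some_mem), fun hbot => by
        obtain ⟨T, hT, hbotT⟩ := Deriv.exists_mem_of_sUnion hchain hne hbot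
        exact (hc hT).2 hbotT⟩,
      fun _ => Set.subset_sUnion_of_mem⟩) S ⟨subset_rfl, h⟩
  exact ⟨Δ, hSΔ, hmax.prop.2, fun T hΔT hT =>
    hΔT.not_subset (hmax.2 ⟨hSΔ.trans hΔT.subset, hT⟩ hΔT.subset)⟩

namespace ILMCS

variable {Γ : Set ILForm}

theorem mem_of_deriv (hΓ : ILMCS P Γ) {F : ILForm} (h : Deriv P Γ F) : F ∈ Γ := by
  by_contra hF
  refine hΓ.2 _ (Set.ssubset_insert hF) fun hbot => hΓ.1 (hbot.trans ?_)
  rintro G (rfl | hG)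
  exacts [h, .mem hG]

theorem mem_of_prov (hΓ : ILMCS P Γ) {F : ILForm} (h : P F) : F ∈ Γ := hΓ.mem_of_deriv (.thm h)

theorem mp₂ (hΓ : ILMCS P Γ) {A B C : ILForm} (h : P (A ➝ B ➝ C)) (hA : A ∈ Γ) (hB : B ∈ Γ) :
    C ∈ Γ :=
  hΓ.mem_of_deriv (.mp (.mp (.thm h) (.mem hA)) (.mem hB))

theorem rhd_trans (hP : ILExtension P) (hΓ : ILMCS P Γ) {A B C : ILForm} (h₁ : A ▷ B ∈ Γ)
    (h₂ : B ▷ C ∈ Γ) : A ▷ C ∈ Γ :=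
  hΓ.mp₂ (hP.imp_imp_of_and_imp (hP.il .J2)) h₁ h₂

theorem or_rhd (hP : ILExtension P) (hΓ : ILMCS P Γ) {A B C : ILForm} (h₁ : A ▷ C ∈ Γ)
    (h₂ : B ▷ C ∈ Γ) : A ⋎ B ▷ C ∈ Γ :=
  hΓ.mp₂ (hP.imp_imp_of_and_imp (hP.il .J3)) h₁ h₂

end ILMCS

/-- For maximal consistent `Γ`, `Γ ≺_{¬C} Δ` iff `Δ` contains `criticalSet Γ C` and its boxes. -/
def criticalSet (Γ : Set ILForm) (C : ILForm) : Set ILForm := {A | ∼A ▷ C ∈ Γ}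

section criticalSet

variable {Γ : Set ILForm} {C : ILForm}

theorem criticalSet_nonempty (hP : ILExtension P) (hΓ : ILMCS P Γ) :
    (criticalSet Γ C).Nonempty :=
  ⟨bot ➝ bot, hΓ.mem_of_prov (hP.rhd_of_imp (hP.taut fun v hv => by simp [hv]))⟩

theorem and_mem_criticalSet (hP : ILExtension P) (hΓ : ILMCS P Γ) {A A' : ILForm}
    (hA : A ∈ criticalSet Γ C) (hA' : A' ∈ criticalSet Γ C) : A ⋏ A' ∈ criticalSet Γ C :=
  hΓ.rhd_trans hP (hΓ.mem_of_prov (hP.rhd_of_imp (hP.taut fun v hv => by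
    simp [hv]; grind))) (hΓ.or_rhd hP hA hA')

theorem consistent_criticalSet (hP : ILExtension P) (hΓ : ILMCS P Γ) {B : ILForm}
    (h : ∼(B ▷ C) ∈ Γ) :
    ILConsistent P ({B, □∼B} ∪ (criticalSet Γ C ∪ ILForm.box '' criticalSet Γ C)) := by
  intro hbot
  obtain ⟨A, hA, hbotA⟩ := hbot.exists_insert_of_union_image_box hP (criticalSet_nonempty hP hΓ)
    (fun _ hA _ hA' => and_mem_criticalSet hP hΓ hA hA')
  have hBA : P (B ▷ ∼A) := hP.rhd_neg_of_imp (Deriv.prov_imp_of_singleton hP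
    ((hbotA.imp_of_insert hP).imp_of_insert hP |>.imp_of_insert hP))
  exact hΓ.1 (.mp (.mem h) (.mem (hΓ.rhd_trans hP (hΓ.mem_of_prov hBA) hA)))

theorem assuring_of_criticalSet_subset (hP : ILExtension P) (hΓ : ILMCS P Γ) {Δ : Set ILForm}
    (hΔ : criticalSet Γ C ∪ ILForm.box '' criticalSet Γ C ⊆ Δ) : Assuring Γ Δ {∼C} := by
  intro A L hL hA
  have hLC : ILTaut (bigOr (L.map ILForm.neg) ➝ C) := .bigOr_imp fun D hD => by
    obtain ⟨_, hC, rfl⟩ := List.mem_map.1 hD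
    rw [hL _ hC]
    exact fun v hv => by simp [hv]
  have hAX : A ∈ criticalSet Γ C :=
    hΓ.rhd_trans hP hA (hΓ.mem_of_prov (hP.rhd_of_imp (hP.taut hLC)))
  exact ⟨hΔ (.inl hAX), hΔ (.inr ⟨A, hAX, rfl⟩)⟩

end criticalSet

/-- If ¬(B ▷ C) ∈ Γ then there is Δ with Γ ≺_{{¬C}} Δ and B, □¬B ∈ Δ. -/
theorem assuring_successor_from_neg_rhd (P : ILForm → Prop) (hP : ILExtension P)
    (Γ : Set ILForm) (hΓ : ILMCS P Γ) (B C : ILForm) (h : (B.rhd C).neg ∈ Γ) :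
    ∃ Δ : Set ILForm, ILMCS P Δ ∧ Assuring Γ Δ {C.neg} ∧ B ∈ Δ ∧ B.neg.box ∈ Δ := by
  obtain ⟨Δ, hsub, hΔ⟩ := exists_ILMCS_superset (consistent_criticalSet hP hΓ h)
  exact ⟨Δ, hΔ, assuring_of_criticalSet_subset hP hΓ (Set.subset_union_right.trans hsub),
    hsub (by simp), hsub (by simp)⟩
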